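/- arXiv:1309.1480 — 3 statements merged into one kernel-verified Lean document; each statement's English description precedes it below -/
import Mathlib

section
/- Faà di Bruno's formula: for ℓ-times differentiable functions g and f, the ℓ-th derivative of g∘f at t equals the sum over all partitions λ = {a₁,...,a_k} of ℓ of (ℓ!/(a₁!···a_k!)) · (1/(β₁!···β_k!)) · g^{(k)}(f(t)) · ∏_{i=1}^k f^{(a_i)}(t), where β_j is the number of parts of λ equal to j. -/
/-!
In its set-partition form (`iteratedDeriv_comp_eq_sum_orderedFinpartition`), Faà di Bruno's
formula is a sum over the set partitions of `{0, …, ℓ - 1}`, each contributing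
`g^{(#blocks)}(f t) · ∏ f^{(block size)}(t)`. That term only depends on the multiset `λ` of block
sizes, so it remains to count the set partitions of type `λ`: there are `ℓ! / (∏ aᵢ! · ∏ βⱼ!)`.
This follows by induction on `ℓ`, since a partition of `{0, …, n}` arises in exactly one way from
a partition of `{1, …, n}` by adding `0` either as a singleton or to an existing block; in the
induction step every part `a` of `λ` contributes `a · β_a · n!`, and `∑ a · β_a = n + 1`.
-/

open Finset
open scoped Nat

namespace Multiset

theorem cons_eq_iff {α : Type*} [DecidableEq α] {a : α} {s t : Multiset α} :
    a ::ₘ s = t ↔ a ∈ t ∧ s = t.erase a := by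
  constructor
  · rintro rfl
    exact ⟨mem_cons_self a s, (erase_cons_head a s).symm⟩
  · rintro ⟨ha, rfl⟩
    exact cons_erase ha

theorem prod_factorial_count_cons {α : Type*} [DecidableEq α] (b : α) (s : Multiset α) :
    ∏ j ∈ (b ::ₘ s).toFinset, ((b ::ₘ s).count j)! =
      (s.count b + 1) * ∏ j ∈ s.toFinset, (s.count j)! := by
  have hb : b ∈ (b ::ₘ s).toFinset := by simp
  have hsub : s.toFinset ⊆ (b ::ₘ s).toFinset := by simp [Finset.subset_insert]
  have hstep (j : α) :
      ((b ::ₘ s).count j)! = (s.count j)! * if j = b then s.count b + 1 else 1 := by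
    rw [count_cons]
    split_ifs with h
    · subst h
      rw [Nat.factorial_succ, mul_comm]
    · simp
  rw [prod_subset hsub fun j _ hj => by simp [count_eq_zero.2 (by simpa using hj)],
    prod_congr rfl fun j _ => hstep j, prod_mul_distrib, prod_ite_eq', if_pos hb, mul_comm]

/-- `∏ aᵢ! · ∏ βⱼ!`, the order of the stabiliser in `Sₙ` of a set partition whose multiset of
block sizes is `s`. -/
def stabilizerOrder (s : Multiset ℕ) : ℕ :=
  (s.map Nat.factorial).prod * ∏ j ∈ s.toFinset, (s.count j)!

theorem stabilizerOrder_cons (b : ℕ) (s : Multiset ℕ) :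
    (b ::ₘ s).stabilizerOrder = b ! * (s.count b + 1) * s.stabilizerOrder := by
  rw [stabilizerOrder, stabilizerOrder, map_cons, prod_cons, prod_factorial_count_cons]
  ring

theorem stabilizerOrder_pos (s : Multiset ℕ) : 0 < s.stabilizerOrder :=
  Nat.mul_pos (prod_pos fun _ h => by obtain ⟨b, -, rfl⟩ := mem_map.1 h; positivity)
    (Finset.prod_pos fun _ _ => by positivity)

theorem count_add_one_mul_stabilizerOrder_cons_succ (b : ℕ) (s : Multiset ℕ) :
    (s.count b + 1) * ((b + 1) ::ₘ s).stabilizerOrder =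
      (b + 1) * ((b + 1) ::ₘ s).count (b + 1) * (b ::ₘ s).stabilizerOrder := by
  rw [stabilizerOrder_cons, stabilizerOrder_cons, count_cons_self, Nat.factorial_succ]
  ring

theorem sum_eq_count_one_add (t : Multiset ℕ) :
    t.sum = t.count 1 + ∑ a ∈ t.toFinset.erase 1, a * t.count a := by
  rw [Finset.sum_multiset_count]
  by_cases h : 1 ∈ t
  · rw [← add_sum_erase _ _ (mem_toFinset.2 h)]
    simp [mul_comm]
  · simp [count_eq_zero.2 h, erase_eq_of_notMem (mt mem_toFinset.1 h), mul_comm]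

/-- Adding a point to a block of size `b` turns a partition of type `s` into one of type
`(b + 1) ::ₘ s.erase b`; this counts the blocks for which the result has type `t`. -/
theorem sum_map_ite_cons_succ_erase {s t : Multiset ℕ} (hs : 0 ∉ s) :
    (s.map fun b => if (b + 1) ::ₘ s.erase b = t then 1 else 0).sum =
      ∑ a ∈ t.toFinset.erase 1,
        if s = (a - 1) ::ₘ t.erase a then (t.erase a).count (a - 1) + 1 else 0 := by
  rw [Finset.sum_multiset_map_count]
  refine sum_bij_ne_zero (fun b _ _ => b + 1) ?_ (fun _ _ _ _ _ _ h => Nat.succ_injective h) ?_ ?_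
  · intro b hb hne
    have h : (b + 1) ::ₘ s.erase b = t := by by_contra h; simp [h] at hne
    have hb0 : b ≠ 0 := by rintro rfl; exact hs (mem_toFinset.1 hb)
    simp [← h, hb0]
  · intro a ha hne
    have h : s = (a - 1) ::ₘ t.erase a := by by_contra h; simp [h] at hne
    obtain ⟨ha1, ha⟩ := Finset.mem_erase.1 ha
    have hmem : a - 1 ∈ s := h ▸ mem_cons_self _ _
    have ha2 : 2 ≤ a := by
      by_contra! ha2
      interval_cases a
      · exact hs hmem
      · exact ha1 rfl
    have hbump : (a - 1 + 1) ::ₘ s.erase (a - 1) = t := by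
      rw [h, erase_cons_head, Nat.sub_add_cancel (by omega), cons_erase (mem_toFinset.1 ha)]
    exact ⟨a - 1, mem_toFinset.2 hmem, by simp [hbump, count_ne_zero.2 hmem], by omega⟩
  · intro b hb hne
    have h : (b + 1) ::ₘ s.erase b = t := by by_contra h; simp [h] at hne
    obtain ⟨hbt, hst⟩ := cons_eq_iff.1 h
    have hs' : s = b ::ₘ t.erase (b + 1) := by rw [← hst, cons_erase (mem_toFinset.1 hb)]
    simp [hs', cons_erase hbt]

end Multiset

namespace OrderedFinpartition

variable {n : ℕ}

section sizes

variable (c : OrderedFinpartition n)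

def sizes : Multiset ℕ := univ.val.map c.partSize

@[simp]
theorem card_sizes : Multiset.card c.sizes = c.length := by simp [sizes]

@[to_additive]
theorem prod_map_sizes {M : Type*} [CommMonoid M] (f : ℕ → M) :
    (c.sizes.map f).prod = ∏ i, f (c.partSize i) := by
  rw [sizes, Multiset.map_map]
  rfl

theorem sum_sizes : c.sizes.sum = n := by
  simpa using (c.sum_map_sizes id).trans (by simpa using Fintype.card_congr c.equivSigma)

theorem zero_notMem_sizes : 0 ∉ c.sizes := by
  intro h
  obtain ⟨i, -, hi⟩ := Multiset.mem_map.1 h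
  exact (c.partSize_pos i).ne' hi

def toPartition : Nat.Partition n where
  parts := c.sizes
  parts_pos h := Nat.pos_of_ne_zero fun h0 => c.zero_notMem_sizes (h0 ▸ h)
  parts_sum := c.sum_sizes

theorem sizes_extendLeft : c.extendLeft.sizes = 1 ::ₘ c.sizes := by
  change (univ : Finset (Fin (c.length + 1))).val.map (Fin.cons 1 c.partSize) = _
  simp [sizes, Fin.univ_val_map, List.ofFn_succ]

theorem sizes_extendMiddle (k : Fin c.length) :
    (c.extendMiddle k).sizes = (c.partSize k + 1) ::ₘ c.sizes.erase (c.partSize k) := by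
  have hk : k ∉ (univ : Finset (Fin c.length)).val.erase k := univ.nodup.notMem_erase
  change (univ : Finset (Fin c.length)).val.map (Function.update c.partSize k _) = _
  rw [sizes, ← Multiset.cons_erase (mem_univ_val k), Multiset.map_cons, Multiset.map_cons,
    Function.update_self, Multiset.erase_cons_head]
  congr 1
  exact Multiset.map_congr rfl fun i hi => Function.update_of_ne (ne_of_mem_of_not_mem hi hk) _ _

end sizes

theorem sum_comp_sizes_succ {M : Type*} [AddCommMonoid M] (f : Multiset ℕ → M) :
    ∑ c : OrderedFinpartition (n + 1), f c.sizes =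
      ∑ c : OrderedFinpartition n,
        (f (1 ::ₘ c.sizes) + (c.sizes.map fun b => f ((b + 1) ::ₘ c.sizes.erase b)).sum) := by
  rw [← (extendEquiv n).sum_comp, Fintype.sum_sigma]
  refine sum_congr rfl fun c _ => ?_
  simp [Fintype.sum_option, sizes_extendLeft, sizes_extendMiddle, sum_map_sizes]

theorem card_filter_sizes_succ (t : Multiset ℕ) :
    #{c : OrderedFinpartition (n + 1) | c.sizes = t} =
      #{c : OrderedFinpartition n | 1 ::ₘ c.sizes = t} +
        ∑ a ∈ t.toFinset.erase 1, ((t.erase a).count (a - 1) + 1) *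
          #{c : OrderedFinpartition n | c.sizes = (a - 1) ::ₘ t.erase a} := by
  rw [card_filter, sum_comp_sizes_succ fun s => if s = t then 1 else 0, sum_add_distrib,
    card_filter]
  congr 1
  rw [sum_congr rfl fun c _ => Multiset.sum_map_ite_cons_succ_erase c.zero_notMem_sizes,
    sum_comm]
  refine sum_congr rfl fun a _ => ?_
  rw [card_filter, mul_sum]
  simp only [mul_boole]

theorem card_filter_sizes_mul_stabilizerOrder :
    ∀ {n : ℕ} {t : Multiset ℕ}, 0 ∉ t → t.sum = n →
      #{c : OrderedFinpartition n | c.sizes = t} * t.stabilizerOrder = n !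
  | 0, t, ht, hsum => by
    have h0 : t = 0 := Multiset.eq_zero_of_forall_notMem fun a ha =>
      ht ((Multiset.sum_eq_zero_iff.1 hsum a ha) ▸ ha)
    have hc (c : OrderedFinpartition 0) : c.sizes = 0 :=
      Multiset.card_eq_zero.1 (by simpa using c.length_le)
    simp [h0, hc, Multiset.stabilizerOrder]
  | n + 1, t, ht, hsum => by
    have ih {s : Multiset ℕ} (hs : 0 ∉ s) (hsum : s.sum = n) :=
      card_filter_sizes_mul_stabilizerOrder hs hsum
    have hleft : #{c : OrderedFinpartition n | 1 ::ₘ c.sizes = t} * t.stabilizerOrder =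
        t.count 1 * n ! := by
      by_cases h1 : 1 ∈ t
      · obtain ⟨s, rfl⟩ := Multiset.exists_cons_of_mem h1
        have hs : 0 ∉ s := fun h => ht (Multiset.mem_cons_of_mem h)
        simp only [Multiset.cons_inj_right, Multiset.stabilizerOrder_cons,
          Multiset.count_cons_self]
        rw [← ih hs (by simpa [add_comm] using hsum)]
        ring
      · simp [Multiset.cons_eq_iff, h1]
    have hmiddle : ∀ a ∈ t.toFinset.erase 1, ((t.erase a).count (a - 1) + 1) *
        #{c : OrderedFinpartition n | c.sizes = (a - 1) ::ₘ t.erase a} * t.stabilizerOrder =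
          a * t.count a * n ! := by
      intro a ha
      obtain ⟨ha1, hat⟩ := Finset.mem_erase.1 ha
      replace hat := Multiset.mem_toFinset.1 hat
      obtain ⟨b, rfl⟩ : ∃ b, a = b + 1 :=
        ⟨a - 1, by have := ne_of_mem_of_not_mem hat ht; omega⟩
      obtain ⟨s, rfl⟩ := Multiset.exists_cons_of_mem hat
      have hs : 0 ∉ b ::ₘ s := by
        simpa [show 0 ≠ b by omega, eq_comm] using ht
      have hsum' : (b ::ₘ s).sum = n := by
        simp only [Multiset.sum_cons] at hsum ⊢
        omega
      rw [Nat.add_sub_cancel, Multiset.erase_cons_head, mul_right_comm,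
        Multiset.count_add_one_mul_stabilizerOrder_cons_succ, mul_assoc,
        mul_comm (Multiset.stabilizerOrder _), ih hs hsum']
    rw [card_filter_sizes_succ, add_mul, sum_mul, hleft, sum_congr rfl hmiddle, ← sum_mul,
      ← add_mul, ← Multiset.sum_eq_count_one_add, hsum, Nat.factorial_succ]

theorem sum_comp_sizes_eq_sum_partition {K : Type*} [DivisionSemiring K] [CharZero K]
    (f : Multiset ℕ → K) :
    ∑ c : OrderedFinpartition n, f c.sizes =
      ∑ P : Nat.Partition n, (n ! / P.parts.stabilizerOrder : K) * f P.parts := by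
  rw [← sum_fiberwise univ toPartition]
  refine sum_congr rfl fun P _ => ?_
  have hfiber : ({c | c.toPartition = P} : Finset (OrderedFinpartition n)) =
      ({c | c.sizes = P.parts} : Finset (OrderedFinpartition n)) :=
    filter_congr fun c _ => Nat.Partition.ext_iff
  have hcard : (#{c : OrderedFinpartition n | c.sizes = P.parts} : K) =
      n ! / P.parts.stabilizerOrder := by
    rw [eq_div_iff (by exact_mod_cast (Multiset.stabilizerOrder_pos _).ne')]
    exact_mod_cast card_filter_sizes_mul_stabilizerOrder (fun h => (P.parts_pos h).false)
      P.parts_sum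
  rw [hfiber, sum_congr rfl fun c hc => congrArg f (mem_filter.1 hc).2, sum_const, nsmul_eq_mul,
    hcard]

end OrderedFinpartition

/-- Faà di Bruno's formula: the ℓ-th derivative of g ∘ f at t is a sum over the partitions
λ of ℓ of the multinomial coefficient ℓ!/(a₁!⋯a_k!), divided by the product β₁!⋯β_k! of
factorials of the multiplicities, times g^{(k)}(f(t)) times ∏ f^{(aᵢ)}(t). -/
theorem faa_di_bruno (ℓ : ℕ) (f g : ℝ → ℝ) (t : ℝ)
    (hf : ContDiffAt ℝ ℓ f t) (hg : ContDiffAt ℝ ℓ g (f t)) :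
    iteratedDeriv ℓ (fun s => g (f s)) t
      = ∑ P : Nat.Partition ℓ,
          ((ℓ.factorial : ℝ) / ((P.parts.map Nat.factorial).prod : ℕ))
          * (1 / ((∏ j ∈ P.parts.toFinset, (P.parts.count j).factorial : ℕ) : ℝ))
          * iteratedDeriv (Multiset.card P.parts) g (f t)
          * ((P.parts.map (fun a => iteratedDeriv a f t)).prod) := by
  let term (s : Multiset ℕ) : ℝ :=
    iteratedDeriv (Multiset.card s) g (f t) * (s.map fun a => iteratedDeriv a f t).prod
  calc iteratedDeriv ℓ (g ∘ f) t
      = ∑ c : OrderedFinpartition ℓ, term c.sizes := by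
        rw [iteratedDeriv_comp_eq_sum_orderedFinpartition hg hf le_rfl]
        simp [term, OrderedFinpartition.prod_map_sizes]
    _ = _ := by
        rw [OrderedFinpartition.sum_comp_sizes_eq_sum_partition term]
        refine sum_congr rfl fun P _ => ?_
        simp only [term, Multiset.stabilizerOrder, Nat.cast_mul]
        ring
end

section
/- Specialization of Faà di Bruno to the exponential: the ℓ-th derivative with respect to p of exp(p·x₁ + ... + p^N·x_N) equals exp(p·x₁+...+p^N·x_N) times ∑_{λ ⊢ ℓ} (ℓ!/(a₁!···a_k!)) · (1/(β₁!···β_k!)) · ∏_{i=1}^k (∑_{j=1}^N (j)_{a_i} p^{j-a_i} x_j). -/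
/-!
Put `g_a(p) = ∑_j (j)_a p^(j-a) x_j`, so that `g_a' = g_(a+1)` and the exponent is `g_0`. Let
`Y_n = ∑_{λ ⊢ n} n!/(∏ aᵢ! ∏ βⱼ!) ∏ g_(aᵢ)` be the complete Bell polynomial and `D` the derivation
with `D g_a = g_(a+1)`. The product rule gives `(exp g_0 · Y_n)' = exp g_0 · (g_1 Y_n + D Y_n)`, so
by induction it suffices that `Y_(n+1) = g_1 Y_n + D Y_n`. The right side is a sum over partitions
of `n` with a marked part `a` raised to `a + 1` (`a = 0` creating a new part `1`); the left side,
after splitting `n + 1 = ∑_c β_c c`, is a sum over partitions of `n + 1` with a marked part `c`.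
Raising the marked part is a bijection between the two index sets and matches the coefficients.
-/

open scoped Nat

theorem HasDerivAt.multisetProd {𝕜 𝔸 ι : Type*} [NontriviallyNormedField 𝕜] [NormedCommRing 𝔸]
    [NormedAlgebra 𝕜 𝔸] [DecidableEq ι] {u : Multiset ι} {g : ι → 𝕜 → 𝔸} {g' : ι → 𝔸} {x : 𝕜}
    (h : ∀ i ∈ u, HasDerivAt (g i ·) (g' i) x) :
    HasDerivAt (fun x ↦ (u.map (g · x)).prod)
      (u.map fun i ↦ ((u.erase i).map (g · x)).prod • g' i).sum x := by
  refine (HasFDerivAt.multiset_prod fun i hi ↦ (h i hi).hasFDerivAt).hasDerivAt.congr_deriv ?_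
  rw [← ContinuousLinearMap.apply_apply (1 : 𝕜), map_multiset_sum, Multiset.map_map]
  congr 1
  exact Multiset.map_congr rfl fun i _ ↦ by simp

theorem hasDerivAt_descFactorial_mul_pow {𝕜 : Type*} [NontriviallyNormedField 𝕜] (j a : ℕ)
    (q : 𝕜) :
    HasDerivAt (fun q ↦ (j.descFactorial a : 𝕜) * q ^ (j - a))
      ((j.descFactorial (a + 1) : 𝕜) * q ^ (j - (a + 1))) q := by
  refine ((hasDerivAt_pow (j - a) q).const_mul _).congr_deriv ?_
  rw [Nat.descFactorial_succ, show j - (a + 1) = j - a - 1 by omega]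
  push_cast
  ring

theorem prod_count_factorial_cons {α : Type*} [DecidableEq α] (b : α) (u : Multiset α) :
    ∏ j ∈ (b ::ₘ u).toFinset, ((b ::ₘ u).count j)! =
      (u.count b + 1) * ∏ j ∈ u.toFinset, (u.count j)! := by
  have hb : b ∈ (b ::ₘ u).toFinset := by simp
  have hsub : ∏ j ∈ u.toFinset, (u.count j)! = ∏ j ∈ (b ::ₘ u).toFinset, (u.count j)! :=
    Finset.prod_subset (fun j ↦ by simp +contextual) fun j _ hj ↦ by
      simp [Multiset.count_eq_zero.2 (by simpa using hj)]
  rw [hsub, ← Finset.mul_prod_erase _ _ hb, ← Finset.mul_prod_erase _ (fun j ↦ (u.count j)!) hb,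
    Multiset.count_cons_self, Nat.factorial_succ, mul_assoc]
  congr 2
  exact Finset.prod_congr rfl fun j hj ↦ by
    rw [Multiset.count_cons_of_ne (Finset.ne_of_mem_erase hj)]

def partitionParts (n : ℕ) : Finset (Multiset ℕ) :=
  (Finset.univ : Finset (Nat.Partition n)).image (·.parts)

theorem mem_partitionParts {n : ℕ} {s : Multiset ℕ} :
    s ∈ partitionParts n ↔ s.sum = n ∧ 0 ∉ s := by
  simp only [partitionParts, Finset.mem_image, Finset.mem_univ, true_and]
  refine ⟨?_, fun ⟨hs, h0⟩ ↦ ⟨⟨s, fun hi ↦ Nat.pos_of_ne_zero (by rintro rfl; exact h0 hi), hs⟩, rfl⟩⟩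
  rintro ⟨P, rfl⟩
  exact ⟨P.parts_sum, fun h ↦ (P.parts_pos h).ne' rfl⟩

theorem sum_partition_eq_sum_partitionParts {M : Type*} [AddCommMonoid M] (n : ℕ)
    (f : Multiset ℕ → M) : ∑ P : Nat.Partition n, f P.parts = ∑ s ∈ partitionParts n, f s :=
  (Finset.sum_image fun _ _ _ _ h ↦ Nat.Partition.ext h).symm

/-- For `a = 0 ∉ s` this adds a new part `1`. -/
def raisePart (s : Multiset ℕ) (a : ℕ) : Multiset ℕ := (a + 1) ::ₘ s.erase a

def lowerPart (t : Multiset ℕ) (c : ℕ) : Multiset ℕ :=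
  if c = 1 then t.erase 1 else (c - 1) ::ₘ t.erase c

theorem raisePart_mem_partitionParts {n a : ℕ} {s : Multiset ℕ} (hs : s ∈ partitionParts n)
    (ha : a ∈ 0 ::ₘ s) : raisePart s a ∈ partitionParts (n + 1) := by
  obtain ⟨hsum, h0⟩ := mem_partitionParts.1 hs
  have hsum' : a + (s.erase a).sum = s.sum := by
    rcases Multiset.mem_cons.1 ha with rfl | ha
    · rw [Multiset.erase_of_notMem h0, zero_add]
    · exact Multiset.sum_erase ha
  refine mem_partitionParts.2 ⟨?_, ?_⟩
  · rw [raisePart, Multiset.sum_cons]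
    omega
  · simpa [raisePart] using fun h ↦ h0 (Multiset.mem_of_mem_erase h)

theorem lowerPart_mem_partitionParts {n c : ℕ} {t : Multiset ℕ} (ht : t ∈ partitionParts (n + 1))
    (hc : c ∈ t) : lowerPart t c ∈ partitionParts n := by
  obtain ⟨hsum, h0⟩ := mem_partitionParts.1 ht
  have hsum' := Multiset.sum_erase hc
  have hc0 : c ≠ 0 := ne_of_mem_of_not_mem hc h0
  have h0' : 0 ∉ t.erase c := fun h ↦ h0 (Multiset.mem_of_mem_erase h)
  refine mem_partitionParts.2 ?_
  unfold lowerPart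
  split_ifs with hc1
  · subst hc1
    exact ⟨by omega, h0'⟩
  · simp only [Multiset.sum_cons, Multiset.mem_cons, not_or]
    exact ⟨by omega, by omega, h0'⟩

theorem sub_one_mem_cons_lowerPart (t : Multiset ℕ) (c : ℕ) : c - 1 ∈ 0 ::ₘ lowerPart t c := by
  unfold lowerPart
  split_ifs with hc <;> simp [hc]

theorem lowerPart_raisePart {s : Multiset ℕ} {a : ℕ} (h0 : 0 ∉ s) (ha : a ∈ 0 ::ₘ s) :
    lowerPart (raisePart s a) (a + 1) = s := by
  rcases Multiset.mem_cons.1 ha with rfl | ha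
  · simp [lowerPart, raisePart, Multiset.erase_of_notMem h0]
  · simp [lowerPart, raisePart, ne_of_mem_of_not_mem ha h0, Multiset.cons_erase ha]

theorem raisePart_lowerPart {t : Multiset ℕ} {c : ℕ} (h0 : 0 ∉ t) (hc : c ∈ t) :
    raisePart (lowerPart t c) (c - 1) = t := by
  by_cases hc1 : c = 1
  · subst hc1
    have h0' : 0 ∉ t.erase 1 := fun h ↦ h0 (Multiset.mem_of_mem_erase h)
    simp [lowerPart, raisePart, Multiset.erase_of_notMem h0', Multiset.cons_erase hc]
  · have hc0 : 1 ≤ c := Nat.one_le_iff_ne_zero.2 (ne_of_mem_of_not_mem hc h0)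
    simp [lowerPart, raisePart, hc1, Nat.sub_add_cancel hc0, Multiset.cons_erase hc]

section CompleteBell

variable {K : Type*} [Field K]

variable (K) in
def bellCoeff (n : ℕ) (s : Multiset ℕ) : K :=
  (n ! : K) / ((s.map Nat.factorial).prod : ℕ) *
    (1 / ((∏ j ∈ s.toFinset, (s.count j)! : ℕ) : K))

/-- The complete exponential Bell polynomial `Y_n(G 1, G 2, …)`. -/
def completeBell (G : ℕ → K) (n : ℕ) : K :=
  ∑ P : Nat.Partition n, bellCoeff K n P.parts * (P.parts.map G).prod

/-- `D Y_n` for the derivation `D` with `D (G a) = G (a + 1)`. -/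
def completeBellDeriv (G : ℕ → K) (n : ℕ) : K :=
  ∑ P : Nat.Partition n, bellCoeff K n P.parts *
    (P.parts.map fun a ↦ G (a + 1) * ((P.parts.erase a).map G).prod).sum

theorem completeBell_zero (G : ℕ → K) : completeBell G 0 = 1 := by
  simp [completeBell, bellCoeff]

theorem bellCoeff_succ (n : ℕ) (s : Multiset ℕ) :
    bellCoeff K (n + 1) s = (n + 1) * bellCoeff K n s := by
  simp only [bellCoeff, Nat.factorial_succ]
  push_cast
  ring

theorem completeBell_succ_eq_sum_sigma (G : ℕ → K) (n : ℕ) :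
    completeBell G (n + 1) = ∑ x ∈ (partitionParts (n + 1)).sigma (·.toFinset),
      (x.1.count x.2 * x.2 : K) * bellCoeff K n x.1 * (x.1.map G).prod := by
  rw [completeBell, sum_partition_eq_sum_partitionParts (n + 1)
    (fun t ↦ bellCoeff K (n + 1) t * (t.map G).prod), Finset.sum_sigma]
  refine Finset.sum_congr rfl fun t ht ↦ ?_
  have hn : (n + 1 : K) = ∑ c ∈ t.toFinset, (t.count c * c : K) := by
    have := congrArg (Nat.cast (R := K)) (Finset.sum_multiset_count t)
    rw [(mem_partitionParts.1 ht).1] at this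
    simpa using this
  rw [bellCoeff_succ, hn, Finset.sum_mul, Finset.sum_mul]

theorem mul_completeBell_add_completeBellDeriv_eq_sum_sigma (G : ℕ → K) (n : ℕ) :
    G 1 * completeBell G n + completeBellDeriv G n =
      ∑ x ∈ (partitionParts n).sigma (fun s ↦ (0 ::ₘ s).toFinset),
        ((0 ::ₘ x.1).count x.2 : K) * bellCoeff K n x.1 *
          (G (x.2 + 1) * ((x.1.erase x.2).map G).prod) := by
  rw [completeBell, completeBellDeriv, Finset.mul_sum, ← Finset.sum_add_distrib,
    sum_partition_eq_sum_partitionParts n (fun s ↦ G 1 * (bellCoeff K n s * (s.map G).prod) +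
      bellCoeff K n s * (s.map fun a ↦ G (a + 1) * ((s.erase a).map G).prod).sum),
    Finset.sum_sigma]
  refine Finset.sum_congr rfl fun s hs ↦ ?_
  have h0 := (mem_partitionParts.1 hs).2
  rw [Multiset.toFinset_cons, Finset.sum_insert (by simpa using h0), Finset.sum_multiset_map_count,
    Finset.mul_sum]
  dsimp only
  congr 1
  · simp only [Multiset.count_cons_self, Multiset.count_eq_zero_of_notMem h0,
      Multiset.erase_of_notMem h0]
    push_cast
    ring
  · refine Finset.sum_congr rfl fun a ha ↦ ?_
    rw [Multiset.count_cons_of_ne (ne_of_mem_of_not_mem (Multiset.mem_toFinset.1 ha) h0),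
      nsmul_eq_mul]
    ring

variable [CharZero K]

theorem count_mul_bellCoeff_cons (n b : ℕ) (u : Multiset ℕ) :
    ((b ::ₘ u).count b : K) * bellCoeff K n (b ::ₘ u) = bellCoeff K n u / b ! := by
  have hM : (((u.map Nat.factorial).prod : ℕ) : K) ≠ 0 :=
    Nat.cast_ne_zero.2 (Multiset.prod_ne_zero (by simp [Nat.factorial_ne_zero]))
  have hC : (((∏ j ∈ u.toFinset, (u.count j)!) : ℕ) : K) ≠ 0 :=
    Nat.cast_ne_zero.2 (Finset.prod_ne_zero_iff.2 fun _ _ ↦ Nat.factorial_ne_zero _)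
  simp only [bellCoeff, prod_count_factorial_cons, Multiset.count_cons_self, Multiset.map_cons,
    Multiset.prod_cons]
  push_cast
  field_simp

theorem count_mul_bellCoeff_raisePart (n : ℕ) {s : Multiset ℕ} {a : ℕ} (h0 : 0 ∉ s)
    (ha : a ∈ 0 ::ₘ s) :
    ((raisePart s a).count (a + 1) * (a + 1) : K) * bellCoeff K n (raisePart s a) =
      (0 ::ₘ s).count a * bellCoeff K n s := by
  rcases Multiset.mem_cons.1 ha with rfl | ha
  · simpa [raisePart, Multiset.erase_of_notMem h0, Multiset.count_eq_zero_of_notMem h0] using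
      count_mul_bellCoeff_cons (K := K) n 1 s
  · obtain ⟨u, rfl⟩ := Multiset.exists_cons_of_mem ha
    rw [raisePart, Multiset.erase_cons_head, Multiset.count_cons_of_ne (ne_of_mem_of_not_mem ha h0),
      mul_comm _ ((a : K) + 1), mul_assoc, count_mul_bellCoeff_cons, count_mul_bellCoeff_cons,
      Nat.factorial_succ]
    push_cast
    field_simp

theorem completeBell_succ (G : ℕ → K) (n : ℕ) :
    completeBell G (n + 1) = G 1 * completeBell G n + completeBellDeriv G n := by
  rw [completeBell_succ_eq_sum_sigma, mul_completeBell_add_completeBellDeriv_eq_sum_sigma]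
  symm
  refine Finset.sum_nbij' (fun x ↦ ⟨raisePart x.1 x.2, x.2 + 1⟩)
    (fun y ↦ ⟨lowerPart y.1 y.2, y.2 - 1⟩) ?_ ?_ ?_ ?_ ?_ <;>
    rintro ⟨s, a⟩ h <;> simp only [Finset.mem_sigma, Multiset.mem_toFinset] at h ⊢
  · exact ⟨raisePart_mem_partitionParts h.1 h.2, Multiset.mem_cons_self _ _⟩
  · exact ⟨lowerPart_mem_partitionParts h.1 h.2, sub_one_mem_cons_lowerPart s a⟩
  · simp [lowerPart_raisePart (mem_partitionParts.1 h.1).2 h.2]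
  · have h0 := (mem_partitionParts.1 h.1).2
    have ha : a - 1 + 1 = a :=
      Nat.sub_add_cancel (Nat.one_le_iff_ne_zero.2 (ne_of_mem_of_not_mem h.2 h0))
    simp [raisePart_lowerPart h0 h.2, ha]
  · push_cast
    rw [count_mul_bellCoeff_raisePart n (mem_partitionParts.1 h.1).2 h.2]
    simp [raisePart]

end CompleteBell

theorem hasDerivAt_completeBell {𝕜 : Type*} [NontriviallyNormedField 𝕜] (G : ℕ → 𝕜 → 𝕜)
    (q : 𝕜) (hG : ∀ a, HasDerivAt (G a) (G (a + 1) q) q) (n : ℕ) :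
    HasDerivAt (fun q ↦ completeBell (G · q) n) (completeBellDeriv (G · q) n) q := by
  refine HasDerivAt.fun_sum fun P _ ↦
    ((HasDerivAt.multisetProd fun a _ ↦ hG a).const_mul _).congr_deriv ?_
  simp [mul_comm]

theorem iteratedDeriv_exp_comp (G : ℕ → ℝ → ℝ) (hG : ∀ a q, HasDerivAt (G a) (G (a + 1) q) q)
    (n : ℕ) :
    iteratedDeriv n (fun q ↦ Real.exp (G 0 q)) =
      fun q ↦ Real.exp (G 0 q) * completeBell (G · q) n := by
  induction n with
  | zero => simp [completeBell_zero]
  | succ n ih =>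
    funext q
    rw [iteratedDeriv_succ, ih, completeBell_succ]
    exact ((hG 0 q).exp.mul (hasDerivAt_completeBell G q (hG · q) n)).deriv.trans (by ring)

/-- Faà di Bruno specialized to φ(p) = exp(p x₁ + ⋯ + p^N x_N): its ℓ-th derivative in p is
exp(p x₁ + ⋯ + p^N x_N) times a sum over partitions of ℓ of multinomial coefficients times
products of the inner sums ∑_j (j)_{aᵢ} p^{j-aᵢ} x_j, with (j)_a the falling factorial. -/
theorem faa_di_bruno_exponential (N ℓ : ℕ) (x : ℕ → ℝ) (p : ℝ) :
    iteratedDeriv ℓ (fun q : ℝ => Real.exp (∑ j ∈ Finset.Icc 1 N, q ^ j * x j)) p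
      = Real.exp (∑ j ∈ Finset.Icc 1 N, p ^ j * x j) *
          ∑ P : Nat.Partition ℓ,
            ((ℓ.factorial : ℝ) / ((P.parts.map Nat.factorial).prod : ℕ))
            * (1 / ((∏ j ∈ P.parts.toFinset, (P.parts.count j).factorial : ℕ) : ℝ))
            * ((P.parts.map (fun a =>
                ∑ j ∈ Finset.Icc 1 N, (j.descFactorial a : ℝ) * p ^ (j - a) * x j)).prod) := by
  let G : ℕ → ℝ → ℝ := fun a q ↦ ∑ j ∈ Finset.Icc 1 N, (j.descFactorial a : ℝ) * q ^ (j - a) * x j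
  have hG : ∀ a q, HasDerivAt (G a) (G (a + 1) q) q := fun a q ↦
    HasDerivAt.fun_sum fun j _ ↦ (hasDerivAt_descFactorial_mul_pow j a q).mul_const (x j)
  have hG0 : ∀ q, ∑ j ∈ Finset.Icc 1 N, q ^ j * x j = G 0 q := fun q ↦ by simp [G]
  simp_rw [hG0, iteratedDeriv_exp_comp G hG]
  rfl
end

section
/- If τ: ℝ³ → ℝ is positive and smooth, and satisfies the constraints τ_y = τ_{xx} and τ_t = τ_{xxx}, then u = 2(log τ)_{xx} satisfies the KP equation (−4u_t + 6u u_x + u_{xxx})_x + 3u_{yy} = 0. -/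
/-- Partial derivative in the first (x) slot. -/
noncomputable def dx (f : ℝ → ℝ → ℝ → ℝ) : ℝ → ℝ → ℝ → ℝ :=
  fun x y t => deriv (fun x' => f x' y t) x

/-- Partial derivative in the second (y) slot. -/
noncomputable def dy (f : ℝ → ℝ → ℝ → ℝ) : ℝ → ℝ → ℝ → ℝ :=
  fun x y t => deriv (fun y' => f x y' t) y

/-- Partial derivative in the third (t) slot. -/
noncomputable def dt (f : ℝ → ℝ → ℝ → ℝ) : ℝ → ℝ → ℝ → ℝ :=
  fun x y t => deriv (fun t' => f x y t') t

def unc (f : ℝ → ℝ → ℝ → ℝ) : ℝ × ℝ × ℝ → ℝ := fun p => f p.1 p.2.1 p.2.2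

lemma dx_apply (f : ℝ → ℝ → ℝ → ℝ) (x y t : ℝ) :
    dx f x y t = deriv (fun x' => f x' y t) x := rfl
lemma dy_apply (f : ℝ → ℝ → ℝ → ℝ) (x y t : ℝ) :
    dy f x y t = deriv (fun y' => f x y' t) y := rfl
lemma dt_apply (f : ℝ → ℝ → ℝ → ℝ) (x y t : ℝ) :
    dt f x y t = deriv (fun t' => f x y t') t := rfl

lemma curve_x (y t : ℝ) : ∀ x : ℝ, HasDerivAt (fun x' : ℝ => ((x', y, t) : ℝ × ℝ × ℝ)) (1, 0, 0) x :=
  fun x => (hasDerivAt_id x).prodMk (hasDerivAt_const x (y, t))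

lemma curve_y (x t : ℝ) : ∀ y : ℝ, HasDerivAt (fun y' : ℝ => ((x, y', t) : ℝ × ℝ × ℝ)) (0, 1, 0) y :=
  fun y => (hasDerivAt_const y x).prodMk ((hasDerivAt_id y).prodMk (hasDerivAt_const y t))

lemma curve_t (x y : ℝ) : ∀ t : ℝ, HasDerivAt (fun t' : ℝ => ((x, y, t') : ℝ × ℝ × ℝ)) (0, 0, 1) t :=
  fun t => (hasDerivAt_const t x).prodMk ((hasDerivAt_const t y).prodMk (hasDerivAt_id t))

lemma slice_x_hasDerivAt (f : ℝ → ℝ → ℝ → ℝ) (hf : ContDiff ℝ (⊤ : ℕ∞) (unc f)) (x y t : ℝ) :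
    HasDerivAt (fun x' => f x' y t) (fderiv ℝ (unc f) (x, y, t) (1, 0, 0)) x :=
  by have := ((hf.differentiable (by simp) (x, y, t)).hasFDerivAt).comp_hasDerivAt x (curve_x y t x); exact this

lemma slice_y_hasDerivAt (f : ℝ → ℝ → ℝ → ℝ) (hf : ContDiff ℝ (⊤ : ℕ∞) (unc f)) (x y t : ℝ) :
    HasDerivAt (fun y' => f x y' t) (fderiv ℝ (unc f) (x, y, t) (0, 1, 0)) y :=
  by have := ((hf.differentiable (by simp) (x, y, t)).hasFDerivAt).comp_hasDerivAt y (curve_y x t y); exact this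

lemma slice_t_hasDerivAt (f : ℝ → ℝ → ℝ → ℝ) (hf : ContDiff ℝ (⊤ : ℕ∞) (unc f)) (x y t : ℝ) :
    HasDerivAt (fun t' => f x y t') (fderiv ℝ (unc f) (x, y, t) (0, 0, 1)) t :=
  by have := ((hf.differentiable (by simp) (x, y, t)).hasFDerivAt).comp_hasDerivAt t (curve_t x y t); exact this

lemma dx_eq_fderiv (f : ℝ → ℝ → ℝ → ℝ) (hf : ContDiff ℝ (⊤ : ℕ∞) (unc f)) (x y t : ℝ) :
    dx f x y t = fderiv ℝ (unc f) (x, y, t) (1, 0, 0) :=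
  (slice_x_hasDerivAt f hf x y t).deriv

lemma dy_eq_fderiv (f : ℝ → ℝ → ℝ → ℝ) (hf : ContDiff ℝ (⊤ : ℕ∞) (unc f)) (x y t : ℝ) :
    dy f x y t = fderiv ℝ (unc f) (x, y, t) (0, 1, 0) :=
  (slice_y_hasDerivAt f hf x y t).deriv

lemma dt_eq_fderiv (f : ℝ → ℝ → ℝ → ℝ) (hf : ContDiff ℝ (⊤ : ℕ∞) (unc f)) (x y t : ℝ) :
    dt f x y t = fderiv ℝ (unc f) (x, y, t) (0, 0, 1) :=
  (slice_t_hasDerivAt f hf x y t).deriv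

lemma hasDerivAt_dx (f : ℝ → ℝ → ℝ → ℝ) (hf : ContDiff ℝ (⊤ : ℕ∞) (unc f)) (x y t : ℝ) :
    HasDerivAt (fun x' => f x' y t) (dx f x y t) x := by
  rw [dx_eq_fderiv f hf]; exact slice_x_hasDerivAt f hf x y t

lemma hasDerivAt_dy (f : ℝ → ℝ → ℝ → ℝ) (hf : ContDiff ℝ (⊤ : ℕ∞) (unc f)) (x y t : ℝ) :
    HasDerivAt (fun y' => f x y' t) (dy f x y t) y := by
  rw [dy_eq_fderiv f hf]; exact slice_y_hasDerivAt f hf x y t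

lemma hasDerivAt_dt (f : ℝ → ℝ → ℝ → ℝ) (hf : ContDiff ℝ (⊤ : ℕ∞) (unc f)) (x y t : ℝ) :
    HasDerivAt (fun t' => f x y t') (dt f x y t) t := by
  rw [dt_eq_fderiv f hf]; exact slice_t_hasDerivAt f hf x y t

lemma unc_dx (f : ℝ → ℝ → ℝ → ℝ) (hf : ContDiff ℝ (⊤ : ℕ∞) (unc f)) :
    unc (dx f) = fun p => fderiv ℝ (unc f) p (1, 0, 0) := by
  funext p
  have := dx_eq_fderiv f hf p.1 p.2.1 p.2.2
  simpa [unc] using this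

lemma unc_dy (f : ℝ → ℝ → ℝ → ℝ) (hf : ContDiff ℝ (⊤ : ℕ∞) (unc f)) :
    unc (dy f) = fun p => fderiv ℝ (unc f) p (0, 1, 0) := by
  funext p
  have := dy_eq_fderiv f hf p.1 p.2.1 p.2.2
  simpa [unc] using this

lemma unc_dt (f : ℝ → ℝ → ℝ → ℝ) (hf : ContDiff ℝ (⊤ : ℕ∞) (unc f)) :
    unc (dt f) = fun p => fderiv ℝ (unc f) p (0, 0, 1) := by
  funext p
  have := dt_eq_fderiv f hf p.1 p.2.1 p.2.2
  simpa [unc] using this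

lemma contDiff_dx (f : ℝ → ℝ → ℝ → ℝ) (hf : ContDiff ℝ (⊤ : ℕ∞) (unc f)) :
    ContDiff ℝ (⊤ : ℕ∞) (unc (dx f)) := by
  rw [unc_dx f hf]; exact (hf.fderiv_right (by simp)).clm_apply contDiff_const

lemma contDiff_dy (f : ℝ → ℝ → ℝ → ℝ) (hf : ContDiff ℝ (⊤ : ℕ∞) (unc f)) :
    ContDiff ℝ (⊤ : ℕ∞) (unc (dy f)) := by
  rw [unc_dy f hf]; exact (hf.fderiv_right (by simp)).clm_apply contDiff_const

lemma contDiff_dt (f : ℝ → ℝ → ℝ → ℝ) (hf : ContDiff ℝ (⊤ : ℕ∞) (unc f)) :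
    ContDiff ℝ (⊤ : ℕ∞) (unc (dt f)) := by
  rw [unc_dt f hf]; exact (hf.fderiv_right (by simp)).clm_apply contDiff_const

lemma fderiv_swap (F : ℝ × ℝ × ℝ → ℝ) (hF : ContDiff ℝ (⊤ : ℕ∞) F) (p v w : ℝ × ℝ × ℝ) :
    fderiv ℝ (fun q => fderiv ℝ F q v) p w = fderiv ℝ (fun q => fderiv ℝ F q w) p v := by
  have hd1 : ∀ q, HasFDerivAt F (fderiv ℝ F q) q := fun q =>
    (hF.differentiable (by simp) q).hasFDerivAt
  have h2 : ContDiff ℝ (⊤ : ℕ∞) (fderiv ℝ F) := hF.fderiv_right (by simp)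
  have hd2 : HasFDerivAt (fderiv ℝ F) (fderiv ℝ (fderiv ℝ F) p) p :=
    (h2.differentiable (by simp) p).hasFDerivAt
  have hs := second_derivative_symmetric hd1 hd2 v w
  have ev : ∀ u : ℝ × ℝ × ℝ, fderiv ℝ (fun q => fderiv ℝ F q u) p =
      (ContinuousLinearMap.apply ℝ ℝ u).comp (fderiv ℝ (fderiv ℝ F) p) := fun u =>
    ((ContinuousLinearMap.apply ℝ ℝ u).hasFDerivAt.comp p hd2).fderiv
  rw [ev v, ev w]
  simpa using hs.symm

lemma dy_dx_comm (f : ℝ → ℝ → ℝ → ℝ) (hf : ContDiff ℝ (⊤ : ℕ∞) (unc f)) :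
    dy (dx f) = dx (dy f) := by
  funext x y t
  rw [dy_eq_fderiv (dx f) (contDiff_dx f hf), dx_eq_fderiv (dy f) (contDiff_dy f hf),
    unc_dx f hf, unc_dy f hf]
  exact fderiv_swap (unc f) hf _ _ _

lemma dt_dx_comm (f : ℝ → ℝ → ℝ → ℝ) (hf : ContDiff ℝ (⊤ : ℕ∞) (unc f)) :
    dt (dx f) = dx (dt f) := by
  funext x y t
  rw [dt_eq_fderiv (dx f) (contDiff_dx f hf), dx_eq_fderiv (dt f) (contDiff_dt f hf),
    unc_dx f hf, unc_dt f hf]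
  exact fderiv_swap (unc f) hf _ _ _

/-- If τ > 0 is smooth and satisfies τ_y = τ_xx and τ_t = τ_xxx, then u = 2(log τ)_xx
satisfies the KP equation (−4u_t + 6u u_x + u_xxx)_x + 3 u_yy = 0. -/
theorem heat_hierarchy_tau_gives_KP_solution (τ : ℝ → ℝ → ℝ → ℝ)
    (hpos : ∀ x y t, 0 < τ x y t)
    (hsmooth : ContDiff ℝ (⊤ : ℕ∞) (fun q : ℝ × ℝ × ℝ => τ q.1 q.2.1 q.2.2))
    (hy : dy τ = dx (dx τ)) (ht : dt τ = dx (dx (dx τ)))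
    (u : ℝ → ℝ → ℝ → ℝ)
    (hu : u = fun x y t => 2 * dx (dx (fun x' y' t' => Real.log (τ x' y' t'))) x y t) :
    ∀ x y t,
      dx (fun a b c => -4 * dt u a b c + 6 * u a b c * dx u a b c + dx (dx (dx u)) a b c)
          x y t
        + 3 * dy (dy u) x y t = 0 := by
  have hs0 : ContDiff ℝ (⊤ : ℕ∞) (unc τ) := hsmooth
  obtain ⟨p1, hp1⟩ : ∃ g, g = dx τ := ⟨_, rfl⟩
  obtain ⟨p2, hp2⟩ : ∃ g, g = dx p1 := ⟨_, rfl⟩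
  obtain ⟨p3, hp3⟩ : ∃ g, g = dx p2 := ⟨_, rfl⟩
  obtain ⟨p4, hp4⟩ : ∃ g, g = dx p3 := ⟨_, rfl⟩
  obtain ⟨p5, hp5⟩ : ∃ g, g = dx p4 := ⟨_, rfl⟩
  obtain ⟨p6, hp6⟩ : ∃ g, g = dx p5 := ⟨_, rfl⟩
  have hs1 : ContDiff ℝ (⊤ : ℕ∞) (unc p1) := by rw [hp1]; exact contDiff_dx τ hs0
  have hs2 : ContDiff ℝ (⊤ : ℕ∞) (unc p2) := by rw [hp2]; exact contDiff_dx p1 hs1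
  have hs3 : ContDiff ℝ (⊤ : ℕ∞) (unc p3) := by rw [hp3]; exact contDiff_dx p2 hs2
  have hs4 : ContDiff ℝ (⊤ : ℕ∞) (unc p4) := by rw [hp4]; exact contDiff_dx p3 hs3
  have hs5 : ContDiff ℝ (⊤ : ℕ∞) (unc p5) := by rw [hp5]; exact contDiff_dx p4 hs4
  have hdy0 : dy τ = p2 := by rw [hy, ← hp1, ← hp2]
  have hdy1 : dy p1 = p3 := by rw [hp1, dy_dx_comm τ hs0, hdy0, ← hp3]
  have hdy2 : dy p2 = p4 := by rw [hp2, dy_dx_comm p1 hs1, hdy1, ← hp4]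
  have hdy3 : dy p3 = p5 := by rw [hp3, dy_dx_comm p2 hs2, hdy2, ← hp5]
  have hdy4 : dy p4 = p6 := by rw [hp4, dy_dx_comm p3 hs3, hdy3, ← hp6]
  have hdt0 : dt τ = p3 := by rw [ht, ← hp1, ← hp2, ← hp3]
  have hdt1 : dt p1 = p4 := by rw [hp1, dt_dx_comm τ hs0, hdt0, ← hp4]
  have hdt2 : dt p2 = p5 := by rw [hp2, dt_dx_comm p1 hs1, hdt1, ← hp5]
  have hX0 : ∀ x y t, HasDerivAt (fun x' => τ x' y t) (p1 x y t) x := by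
    intro x y t; have h := hasDerivAt_dx τ hs0 x y t; rwa [← hp1] at h
  have hX1 : ∀ x y t, HasDerivAt (fun x' => p1 x' y t) (p2 x y t) x := by
    intro x y t; have h := hasDerivAt_dx p1 hs1 x y t; rwa [← hp2] at h
  have hX2 : ∀ x y t, HasDerivAt (fun x' => p2 x' y t) (p3 x y t) x := by
    intro x y t; have h := hasDerivAt_dx p2 hs2 x y t; rwa [← hp3] at h
  have hX3 : ∀ x y t, HasDerivAt (fun x' => p3 x' y t) (p4 x y t) x := by
    intro x y t; have h := hasDerivAt_dx p3 hs3 x y t; rwa [← hp4] at h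
  have hX4 : ∀ x y t, HasDerivAt (fun x' => p4 x' y t) (p5 x y t) x := by
    intro x y t; have h := hasDerivAt_dx p4 hs4 x y t; rwa [← hp5] at h
  have hX5 : ∀ x y t, HasDerivAt (fun x' => p5 x' y t) (p6 x y t) x := by
    intro x y t; have h := hasDerivAt_dx p5 hs5 x y t; rwa [← hp6] at h
  have hY0 : ∀ x y t, HasDerivAt (fun y' => τ x y' t) (p2 x y t) y := by
    intro x y t; have h := hasDerivAt_dy τ hs0 x y t; rwa [hdy0] at h
  have hY1 : ∀ x y t, HasDerivAt (fun y' => p1 x y' t) (p3 x y t) y := by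
    intro x y t; have h := hasDerivAt_dy p1 hs1 x y t; rwa [hdy1] at h
  have hY2 : ∀ x y t, HasDerivAt (fun y' => p2 x y' t) (p4 x y t) y := by
    intro x y t; have h := hasDerivAt_dy p2 hs2 x y t; rwa [hdy2] at h
  have hY3 : ∀ x y t, HasDerivAt (fun y' => p3 x y' t) (p5 x y t) y := by
    intro x y t; have h := hasDerivAt_dy p3 hs3 x y t; rwa [hdy3] at h
  have hY4 : ∀ x y t, HasDerivAt (fun y' => p4 x y' t) (p6 x y t) y := by
    intro x y t; have h := hasDerivAt_dy p4 hs4 x y t; rwa [hdy4] at h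
  have hT0 : ∀ x y t, HasDerivAt (fun t' => τ x y t') (p3 x y t) t := by
    intro x y t; have h := hasDerivAt_dt τ hs0 x y t; rwa [hdt0] at h
  have hT1 : ∀ x y t, HasDerivAt (fun t' => p1 x y t') (p4 x y t) t := by
    intro x y t; have h := hasDerivAt_dt p1 hs1 x y t; rwa [hdt1] at h
  have hT2 : ∀ x y t, HasDerivAt (fun t' => p2 x y t') (p5 x y t) t := by
    intro x y t; have h := hasDerivAt_dt p2 hs2 x y t; rwa [hdt2] at h
  have hlog : dx (fun x' y' t' => Real.log (τ x' y' t')) = fun x y t => p1 x y t / τ x y t := by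
    funext x y t
    rw [dx_apply]
    exact ((hX0 x y t).log (hpos x y t).ne').deriv
  have hu' : u = fun x y t => ((-2 : ℝ) * (p1 x y t * p1 x y t) + (2 : ℝ) * (τ x y t * p2 x y t)) / τ x y t ^ 2 := by
    funext x y t
    have h0 : τ x y t ≠ 0 := (hpos x y t).ne'
    simp only [hu]
    rw [dx_apply]
    have hsl : (fun x' => dx (fun x' y' t' => Real.log (τ x' y' t')) x' y t)
        = fun x' => p1 x' y t / τ x' y t := by
      funext x'
      simp only [hlog]
    rw [hsl]
    have H2 : HasDerivAt (fun x' => p1 x' y t / τ x' y t)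
        ((p2 x y t * τ x y t - p1 x y t * p1 x y t) / τ x y t ^ 2) x :=
      (hX1 x y t).div (hX0 x y t) h0
    rw [H2.deriv]
    field_simp
    ring
  have hux : dx u = fun x y t => ((4 : ℝ) * (p1 x y t * p1 x y t * p1 x y t) + (-6 : ℝ) * (τ x y t * p1 x y t * p2 x y t) + (2 : ℝ) * (τ x y t * τ x y t * p3 x y t)) / τ x y t ^ 3 := by
    funext x y t
    have h0 : τ x y t ≠ 0 := (hpos x y t).ne'
    rw [dx_apply]
    have hsl : (fun x' => u x' y t) = fun x' => ((-2 : ℝ) * (p1 x' y t * p1 x' y t) + (2 : ℝ) * (τ x' y t * p2 x' y t)) / τ x' y t ^ 2 := by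
      funext x'
      simp only [hu']
    rw [hsl]
    have H2 : HasDerivAt (fun x' => ((-2 : ℝ) * (p1 x' y t * p1 x' y t) + (2 : ℝ) * (τ x' y t * p2 x' y t)) / τ x' y t ^ 2) (((4 : ℝ) * (p1 x y t * p1 x y t * p1 x y t) + (-6 : ℝ) * (τ x y t * p1 x y t * p2 x y t) + (2 : ℝ) * (τ x y t * τ x y t * p3 x y t)) / τ x y t ^ 3) x := by
      have H := HasDerivAt.div ((((hX1 x y t).mul (hX1 x y t)).const_mul ((-2) : ℝ)).add (((hX0 x y t).mul (hX2 x y t)).const_mul ((2) : ℝ))) ((hX0 x y t).pow 2) (pow_ne_zero _ h0)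
      refine H.congr_deriv ?_
      simp only [Pi.add_apply, Pi.mul_apply, Pi.pow_apply]
      field_simp
      ring
    rw [H2.deriv]
  have huxx : dx (dx u) = fun x y t => ((-12 : ℝ) * (p1 x y t * p1 x y t * p1 x y t * p1 x y t) + (24 : ℝ) * (τ x y t * p1 x y t * p1 x y t * p2 x y t) + (-6 : ℝ) * (τ x y t * τ x y t * p2 x y t * p2 x y t) + (-8 : ℝ) * (τ x y t * τ x y t * p1 x y t * p3 x y t) + (2 : ℝ) * (τ x y t * τ x y t * τ x y t * p4 x y t)) / τ x y t ^ 4 := by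
    funext x y t
    have h0 : τ x y t ≠ 0 := (hpos x y t).ne'
    rw [dx_apply]
    have hsl : (fun x' => dx u x' y t) = fun x' => ((4 : ℝ) * (p1 x' y t * p1 x' y t * p1 x' y t) + (-6 : ℝ) * (τ x' y t * p1 x' y t * p2 x' y t) + (2 : ℝ) * (τ x' y t * τ x' y t * p3 x' y t)) / τ x' y t ^ 3 := by
      funext x'
      simp only [hux]
    rw [hsl]
    have H2 : HasDerivAt (fun x' => ((4 : ℝ) * (p1 x' y t * p1 x' y t * p1 x' y t) + (-6 : ℝ) * (τ x' y t * p1 x' y t * p2 x' y t) + (2 : ℝ) * (τ x' y t * τ x' y t * p3 x' y t)) / τ x' y t ^ 3) (((-12 : ℝ) * (p1 x y t * p1 x y t * p1 x y t * p1 x y t) + (24 : ℝ) * (τ x y t * p1 x y t * p1 x y t * p2 x y t) + (-6 : ℝ) * (τ x y t * τ x y t * p2 x y t * p2 x y t) + (-8 : ℝ) * (τ x y t * τ x y t * p1 x y t * p3 x y t) + (2 : ℝ) * (τ x y t * τ x y t * τ x y t * p4 x y t)) / τ x y t ^ 4) x := by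
      have H := HasDerivAt.div ((((((hX1 x y t).mul (hX1 x y t)).mul (hX1 x y t)).const_mul ((4) : ℝ)).add ((((hX0 x y t).mul (hX1 x y t)).mul (hX2 x y t)).const_mul ((-6) : ℝ))).add ((((hX0 x y t).mul (hX0 x y t)).mul (hX3 x y t)).const_mul ((2) : ℝ))) ((hX0 x y t).pow 3) (pow_ne_zero _ h0)
      refine H.congr_deriv ?_
      simp only [Pi.add_apply, Pi.mul_apply, Pi.pow_apply]
      field_simp
      ring
    rw [H2.deriv]
  have huxxx : dx (dx (dx u)) = fun x y t => ((48 : ℝ) * (p1 x y t * p1 x y t * p1 x y t * p1 x y t * p1 x y t) + (-120 : ℝ) * (τ x y t * p1 x y t * p1 x y t * p1 x y t * p2 x y t) + (60 : ℝ) * (τ x y t * τ x y t * p1 x y t * p2 x y t * p2 x y t) + (40 : ℝ) * (τ x y t * τ x y t * p1 x y t * p1 x y t * p3 x y t) + (-20 : ℝ) * (τ x y t * τ x y t * τ x y t * p2 x y t * p3 x y t) + (-10 : ℝ) * (τ x y t * τ x y t * τ x y t * p1 x y t * p4 x y t) + (2 : ℝ) * (τ x y t * τ x y t * τ x y t * τ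 x y t * p5 x y t)) / τ x y t ^ 5 := by
    funext x y t
    have h0 : τ x y t ≠ 0 := (hpos x y t).ne'
    rw [dx_apply]
    have hsl : (fun x' => dx (dx u) x' y t) = fun x' => ((-12 : ℝ) * (p1 x' y t * p1 x' y t * p1 x' y t * p1 x' y t) + (24 : ℝ) * (τ x' y t * p1 x' y t * p1 x' y t * p2 x' y t) + (-6 : ℝ) * (τ x' y t * τ x' y t * p2 x' y t * p2 x' y t) + (-8 : ℝ) * (τ x' y t * τ x' y t * p1 x' y t * p3 x' y t) + (2 : ℝ) * (τ x' y t * τ x' y t * τ x' y t * p4 x' y t)) / τ x' y t ^ 4 := by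
      funext x'
      simp only [huxx]
    rw [hsl]
    have H2 : HasDerivAt (fun x' => ((-12 : ℝ) * (p1 x' y t * p1 x' y t * p1 x' y t * p1 x' y t) + (24 : ℝ) * (τ x' y t * p1 x' y t * p1 x' y t * p2 x' y t) + (-6 : ℝ) * (τ x' y t * τ x' y t * p2 x' y t * p2 x' y t) + (-8 : ℝ) * (τ x' y t * τ x' y t * p1 x' y t * p3 x' y t) + (2 : ℝ) * (τ x' y t * τ x' y t * τ x' y t * p4 x' y t)) / τ x' y t ^ 4) (((48 : ℝ) * (p1 x y t * p1 x y t * p1 x y t * p1 x y t * p1 x y t) + (-120 : ℝ) * (τ x y t * p1 x y t * p1 x y t * p1 x y t * p2 x y t) + (60 : ℝ) * (τ x y t * τ x y t * p1 x y t * p2 x y t * p2 x y t) + (40 : ℝ) * (τ x y t * τ x y t * p1 x y t * p1 x y t * p3 x y t) + (-20 : ℝ) * (τ x y t * τ x y t * τ x y t * p2 x y t * p3 x y t) + (-10 : ℝ) * (τ x y t * τ x y t * τ x y t * p1 x y t * p4 x y t) + (2 : ℝ) * (τ x y t * τ x y t * τ x y t * τ x y t * p5 x y t)) / τ x y t ^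 5) x := by
      have H := HasDerivAt.div (((((((((hX1 x y t).mul (hX1 x y t)).mul (hX1 x y t)).mul (hX1 x y t)).const_mul ((-12) : ℝ)).add (((((hX0 x y t).mul (hX1 x y t)).mul (hX1 x y t)).mul (hX2 x y t)).const_mul ((24) : ℝ))).add (((((hX0 x y t).mul (hX0 x y t)).mul (hX2 x y t)).mul (hX2 x y t)).const_mul ((-6) : ℝ))).add (((((hX0 x y t).mul (hX0 x y t)).mul (hX1 x y t)).mul (hX3 x y t)).const_mul ((-8) : ℝ))).add (((((hX0 x y t).mul (hX0 x y t)).mul (hX0 x y t)).mul (hX4 x y t)).const_mul ((2) : ℝ))) ((hX0 x y t).pow 4) (pow_ne_zero _ h0)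
      refine H.congr_deriv ?_
      simp only [Pi.add_apply, Pi.mul_apply, Pi.pow_apply]
      field_simp
      ring
    rw [H2.deriv]
  have hut : dt u = fun x y t => ((4 : ℝ) * (p1 x y t * p1 x y t * p3 x y t) + (-2 : ℝ) * (τ x y t * p2 x y t * p3 x y t) + (-4 : ℝ) * (τ x y t * p1 x y t * p4 x y t) + (2 : ℝ) * (τ x y t * τ x y t * p5 x y t)) / τ x y t ^ 3 := by
    funext x y t
    have h0 : τ x y t ≠ 0 := (hpos x y t).ne'
    rw [dt_apply]
    have hsl : (fun t' => u x y t') = fun t' => ((-2 : ℝ) * (p1 x y t' * p1 x y t') + (2 : ℝ) * (τ x y t' * p2 x y t')) / τ x y t' ^ 2 := by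
      funext t'
      simp only [hu']
    rw [hsl]
    have H2 : HasDerivAt (fun t' => ((-2 : ℝ) * (p1 x y t' * p1 x y t') + (2 : ℝ) * (τ x y t' * p2 x y t')) / τ x y t' ^ 2) (((4 : ℝ) * (p1 x y t * p1 x y t * p3 x y t) + (-2 : ℝ) * (τ x y t * p2 x y t * p3 x y t) + (-4 : ℝ) * (τ x y t * p1 x y t * p4 x y t) + (2 : ℝ) * (τ x y t * τ x y t * p5 x y t)) / τ x y t ^ 3) t := by
      have H := HasDerivAt.div ((((hT1 x y t).mul (hT1 x y t)).const_mul ((-2) : ℝ)).add (((hT0 x y t).mul (hT2 x y t)).const_mul ((2) : ℝ))) ((hT0 x y t).pow 2) (pow_ne_zero _ h0)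
      refine H.congr_deriv ?_
      simp only [Pi.add_apply, Pi.mul_apply, Pi.pow_apply]
      field_simp
      ring
    rw [H2.deriv]
  have huy : dy u = fun x y t => ((4 : ℝ) * (p1 x y t * p1 x y t * p2 x y t) + (-2 : ℝ) * (τ x y t * p2 x y t * p2 x y t) + (-4 : ℝ) * (τ x y t * p1 x y t * p3 x y t) + (2 : ℝ) * (τ x y t * τ x y t * p4 x y t)) / τ x y t ^ 3 := by
    funext x y t
    have h0 : τ x y t ≠ 0 := (hpos x y t).ne'
    rw [dy_apply]
    have hsl : (fun y' => u x y' t) = fun y' => ((-2 : ℝ) * (p1 x y' t * p1 x y' t) + (2 : ℝ) * (τ x y' t * p2 x y' t)) / τ x y' t ^ 2 := by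
      funext y'
      simp only [hu']
    rw [hsl]
    have H2 : HasDerivAt (fun y' => ((-2 : ℝ) * (p1 x y' t * p1 x y' t) + (2 : ℝ) * (τ x y' t * p2 x y' t)) / τ x y' t ^ 2) (((4 : ℝ) * (p1 x y t * p1 x y t * p2 x y t) + (-2 : ℝ) * (τ x y t * p2 x y t * p2 x y t) + (-4 : ℝ) * (τ x y t * p1 x y t * p3 x y t) + (2 : ℝ) * (τ x y t * τ x y t * p4 x y t)) / τ x y t ^ 3) y := by
      have H := HasDerivAt.div ((((hY1 x y t).mul (hY1 x y t)).const_mul ((-2) : ℝ)).add (((hY0 x y t).mul (hY2 x y t)).const_mul ((2) : ℝ))) ((hY0 x y t).pow 2) (pow_ne_zero _ h0)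
      refine H.congr_deriv ?_
      simp only [Pi.add_apply, Pi.mul_apply, Pi.pow_apply]
      field_simp
      ring
    rw [H2.deriv]
  have huyy : dy (dy u) = fun x y t => ((-12 : ℝ) * (p1 x y t * p1 x y t * p2 x y t * p2 x y t) + (4 : ℝ) * (τ x y t * p2 x y t * p2 x y t * p2 x y t) + (16 : ℝ) * (τ x y t * p1 x y t * p2 x y t * p3 x y t) + (4 : ℝ) * (τ x y t * p1 x y t * p1 x y t * p4 x y t) + (-4 : ℝ) * (τ x y t * τ x y t * p3 x y t * p3 x y t) + (-6 : ℝ) * (τ x y t * τ x y t * p2 x y t * p4 x y t) + (-4 : ℝ) * (τ x y t * τ x y t * p1 x y t * p5 x y t) + (2 : ℝ) * (τ x y t * τ x y t * τ x y t * p6 x y t)) / τ x y t ^ 4 := by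
    funext x y t
    have h0 : τ x y t ≠ 0 := (hpos x y t).ne'
    rw [dy_apply]
    have hsl : (fun y' => dy u x y' t) = fun y' => ((4 : ℝ) * (p1 x y' t * p1 x y' t * p2 x y' t) + (-2 : ℝ) * (τ x y' t * p2 x y' t * p2 x y' t) + (-4 : ℝ) * (τ x y' t * p1 x y' t * p3 x y' t) + (2 : ℝ) * (τ x y' t * τ x y' t * p4 x y' t)) / τ x y' t ^ 3 := by
      funext y'
      simp only [huy]
    rw [hsl]
    have H2 : HasDerivAt (fun y' => ((4 : ℝ) * (p1 x y' t * p1 x y' t * p2 x y' t) + (-2 : ℝ) * (τ x y' t * p2 x y' t * p2 x y' t) + (-4 : ℝ) * (τ x y' t * p1 x y' t * p3 x y' t) + (2 : ℝ) * (τ x y' t * τ x y' t * p4 x y' t)) / τ x y' t ^ 3) (((-12 : ℝ) * (p1 x y t * p1 x y t * p2 x y t * p2 x y t) + (4 : ℝ) * (τ x y t * p2 x y t * p2 x y t * p2 x y t) + (16 : ℝ) * (τ x y t * p1 x y t * p2 x y t * p3 x y t) + (4 : ℝ) * (τ x y t * p1 x y t * p1 x y t * p4 x y t) + (-4 : ℝ)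 * (τ x y t * τ x y t * p3 x y t * p3 x y t) + (-6 : ℝ) * (τ x y t * τ x y t * p2 x y t * p4 x y t) + (-4 : ℝ) * (τ x y t * τ x y t * p1 x y t * p5 x y t) + (2 : ℝ) * (τ x y t * τ x y t * τ x y t * p6 x y t)) / τ x y t ^ 4) y := by
      have H := HasDerivAt.div (((((((hY1 x y t).mul (hY1 x y t)).mul (hY2 x y t)).const_mul ((4) : ℝ)).add ((((hY0 x y t).mul (hY2 x y t)).mul (hY2 x y t)).const_mul ((-2) : ℝ))).add ((((hY0 x y t).mul (hY1 x y t)).mul (hY3 x y t)).const_mul ((-4) : ℝ))).add ((((hY0 x y t).mul (hY0 x y t)).mul (hY4 x y t)).const_mul ((2) : ℝ))) ((hY0 x y t).pow 3) (pow_ne_zero _ h0)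
      refine H.congr_deriv ?_
      simp only [Pi.add_apply, Pi.mul_apply, Pi.pow_apply]
      field_simp
      ring
    rw [H2.deriv]
  have hC : (fun a b c => -4 * dt u a b c + 6 * u a b c * dx u a b c + dx (dx (dx u)) a b c)
      = fun x y t => ((-12 : ℝ) * (p1 x y t * p2 x y t * p2 x y t) + (12 : ℝ) * (τ x y t * p2 x y t * p3 x y t) + (6 : ℝ) * (τ x y t * p1 x y t * p4 x y t) + (-6 : ℝ) * (τ x y t * τ x y t * p5 x y t)) / τ x y t ^ 3 := by
    funext a b c
    have h0 : τ a b c ≠ 0 := (hpos a b c).ne'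
    simp only [hut]
    simp only [huxxx]
    simp only [hux]
    simp only [hu']
    field_simp
    ring
  intro x y t
  have h0 : τ x y t ≠ 0 := (hpos x y t).ne'
  rw [hC]
  simp only [huyy]
  rw [dx_apply]
  have H2 : HasDerivAt (fun x' => ((-12 : ℝ) * (p1 x' y t * p2 x' y t * p2 x' y t) + (12 : ℝ) * (τ x' y t * p2 x' y t * p3 x' y t) + (6 : ℝ) * (τ x' y t * p1 x' y t * p4 x' y t) + (-6 : ℝ) * (τ x' y t * τ x' y t * p5 x' y t)) / τ x' y t ^ 3)
      (((36 : ℝ) * (p1 x y t * p1 x y t * p2 x y t * p2 x y t) + (-12 : ℝ) * (τ x y t * p2 x y t * p2 x y t * p2 x y t) + (-48 : ℝ) * (τ x y t * p1 x y t * p2 x y t * p3 x y t) + (-12 : ℝ) * (τ x y t * p1 x y t * p1 x y t * p4 x y t) + (12 : ℝ) * (τ x y t * τ x y t * p3 x y t * p3 x y t) + (18 : ℝ) * (τ x y t * τ x y t * p2 x y t * p4 x y t) + (12 : ℝ) * (τ x y t * τ x y t * p1 x y t * p5 x y t) + (-6 : ℝ) * (τ x y t * τ x y t * τ x y t * p6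 x y t)) / τ x y t ^ 4) x := by
    have H := HasDerivAt.div (((((((hX1 x y t).mul (hX2 x y t)).mul (hX2 x y t)).const_mul ((-12) : ℝ)).add ((((hX0 x y t).mul (hX2 x y t)).mul (hX3 x y t)).const_mul ((12) : ℝ))).add ((((hX0 x y t).mul (hX1 x y t)).mul (hX4 x y t)).const_mul ((6) : ℝ))).add ((((hX0 x y t).mul (hX0 x y t)).mul (hX5 x y t)).const_mul ((-6) : ℝ))) ((hX0 x y t).pow 3) (pow_ne_zero _ h0)
    refine H.congr_deriv ?_
    simp only [Pi.add_apply, Pi.mul_apply, Pi.pow_apply]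
    field_simp
    ring
  rw [H2.deriv]
  field_simp
  ring
end
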